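/- arXiv:math/9903103 — 2 statements merged into one kernel-verified Lean document; each statement's English description precedes it below -/
import Mathlib

section
/- Let ℓ₂([0,1]) be the Hilbert space of real functions x on [0,1] with Σ_{t∈[0,1]} |x(t)|² < ∞, with norm ‖x‖ = (Σ_{t∈[0,1]} |x(t)|²)^{1/2}, and let e_t = χ_{{t}} be its standard unit vectors. Define f : [0,1] → ℓ₂([0,1]) by f(t) = e_t. Then f is Riemann integrable with Riemann integral 0, but f is not Bochner-integrable with respect to Lebesgue measure on [0,1]; in particular, f is not almost everywhere equal to any strongly measurable (i.e. almost separably valued measurable) function. -/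
open MeasureTheory Set Pointwise

/-- A countable partition of `A` into pairwise disjoint measurable pieces
(possibly empty, so that finite partitions are included). -/
def IsRLPartition {Ω : Type*} [MeasurableSpace Ω] (A : Set Ω) (P : ℕ → Set Ω) : Prop :=
  (∀ i, MeasurableSet (P i)) ∧ Pairwise (Function.onFun Disjoint P) ∧ (⋃ i, P i) = A

/-- `Γ` is finer than (inscribed into) `P`: every piece of `Γ` is contained in a piece of `P`. -/
def IsFinerPartition {Ω : Type*} (Γ P : ℕ → Set Ω) : Prop :=
  ∀ j, ∃ i, Γ j ⊆ P i

/-- `T` is a choice of sampling points for the partition `P`. -/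
def IsSampling {Ω : Type*} (P : ℕ → Set Ω) (T : ℕ → Ω) : Prop :=
  ∀ i, (P i).Nonempty → T i ∈ P i

/-- The RL integral sum `S(f, P, T) = ∑ᵢ μ(Pᵢ) • f(Tᵢ)`. -/
noncomputable def RLSum {Ω X : Type*} [MeasurableSpace Ω] [NormedAddCommGroup X]
    [NormedSpace ℝ X] (μ : Measure Ω) (f : Ω → X) (P : ℕ → Set Ω) (T : ℕ → Ω) : X :=
  ∑' i, (μ (P i)).toReal • f (T i)

/-- Absolute convergence of the RL integral sum. -/
def RLSumAbsConv {Ω X : Type*} [MeasurableSpace Ω] [NormedAddCommGroup X]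
    (μ : Measure Ω) (f : Ω → X) (P : ℕ → Set Ω) (T : ℕ → Ω) : Prop :=
  Summable fun i => (μ (P i)).toReal * ‖f (T i)‖

/-- `f` is RL-integrable over `A` with RL integral `x`. -/
def HasRLIntegral {Ω X : Type*} [MeasurableSpace Ω] [NormedAddCommGroup X] [NormedSpace ℝ X]
    (μ : Measure Ω) (f : Ω → X) (A : Set Ω) (x : X) : Prop :=
  ∀ ε > 0, ∃ P : ℕ → Set Ω, IsRLPartition A P ∧
    ∀ Γ : ℕ → Set Ω, IsRLPartition A Γ → IsFinerPartition Γ P →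
      ∀ T : ℕ → Ω, IsSampling Γ T →
        RLSumAbsConv μ f Γ T ∧ ‖RLSum μ f Γ T - x‖ < ε

/-- `f` has a Lebesgue-integrable majorant, i.e. `f ∈ L̄₁(Ω, Σ, μ, X)`. -/
def HasIntegrableMajorant {Ω X : Type*} [MeasurableSpace Ω] [NormedAddCommGroup X]
    (μ : Measure Ω) (f : Ω → X) : Prop :=
  ∃ g : Ω → ℝ, Integrable g μ ∧ ∀ t, ‖f t‖ ≤ g t

/-- The limit set `I(f)`: all limit points of the net of absolute RL integral sums. -/
def RLLimitSet {Ω X : Type*} [MeasurableSpace Ω] [NormedAddCommGroup X] [NormedSpace ℝ X]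
    (μ : Measure Ω) (f : Ω → X) : Set X :=
  {x | ∀ ε > 0, ∀ P : ℕ → Set Ω, IsRLPartition Set.univ P →
    ∃ Γ : ℕ → Set Ω, IsRLPartition Set.univ Γ ∧ IsFinerPartition Γ P ∧
      ∃ T : ℕ → Ω, IsSampling Γ T ∧ RLSumAbsConv μ f Γ T ∧ ‖RLSum μ f Γ T - x‖ < ε}

/-- `g` is a Bochner-integrable equivalent of `f`: `g` is Bochner integrable and the
RL integral of `f` over every measurable set equals the Bochner integral of `g` over it. -/
def BochnerEquivalent {Ω X : Type*} [MeasurableSpace Ω] [NormedAddCommGroup X] [NormedSpace ℝ X]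
    (μ : Measure Ω) (f g : Ω → X) : Prop :=
  Integrable g μ ∧ ∀ A : Set Ω, MeasurableSet A → HasRLIntegral μ f A (∫ ω in A, g ω ∂μ)

/-- `f : [0,1] → X` is Riemann integrable with Riemann integral `x`. -/
def HasRiemannIntegral {X : Type*} [NormedAddCommGroup X] [NormedSpace ℝ X]
    (f : ℝ → X) (x : X) : Prop :=
  ∀ ε > 0, ∃ δ > 0, ∀ (n : ℕ) (a : ℕ → ℝ) (t : ℕ → ℝ),
    a 0 = 0 → a n = 1 → (∀ i < n, a i ≤ a (i + 1)) →
    (∀ i < n, a (i + 1) - a i < δ) →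
    (∀ i < n, t i ∈ Set.Icc (a i) (a (i + 1))) →
    ‖(∑ i ∈ Finset.range n, (a (i + 1) - a i) • f (t i)) - x‖ < ε

/-- The function `f : [0,1] → ℓ₂([0,1])`, `f t = e_t` (extended by `0` outside `[0,1]`). -/
noncomputable def ortFn2 (t : ℝ) : lp (fun _ : ↥(Set.Icc (0:ℝ) 1) => ℝ) 2 :=
  if h : t ∈ Set.Icc (0:ℝ) 1 then lp.single 2 (⟨t, h⟩ : ↥(Set.Icc (0:ℝ) 1)) 1 else 0

open scoped RealInnerProductSpace

/-!
The values `e_t` are pairwise orthogonal vectors of norm at most one. In a Riemann sum with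
mesh `< δ`, the cells carrying the same tag `t` all lie in `[t - δ, t + δ]`, so their lengths
add up to at most `2δ`. Expanding the squared norm of the Riemann sum, only pairs of cells with
equal tags contribute, so it is at most `2δ` times the total length `1`.

On the other hand, distinct `e_s, e_t` with `s, t ∈ [0,1]` are `√2` apart. A strongly measurable
`g` has separable range, so the set where `f = g` is mapped by `g` to a `√2`-separated subset of a
separable space; it is therefore countable, hence Lebesgue-null, and `f = g` cannot hold a.e.
-/

section Riemann

variable {E : Type*} [NormedAddCommGroup E] [InnerProductSpace ℝ E]

theorem norm_sq_sum_smul_le_of_orthogonal {α κ : Type*} [DecidableEq α] {v : α → E}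
    (hv : Pairwise fun a b => ⟪v a, v b⟫ = 0) (hv1 : ∀ a, ‖v a‖ ≤ 1)
    {K : Finset κ} {c : κ → ℝ} (hc : ∀ k ∈ K, 0 ≤ c k) (σ : κ → α) {B : ℝ}
    (hB : ∀ k ∈ K, ∑ l ∈ K with σ l = σ k, c l ≤ B) :
    ‖∑ k ∈ K, c k • v (σ k)‖ ^ 2 ≤ B * ∑ k ∈ K, c k := by
  have hinner : ∀ a b, ⟪v a, v b⟫ ≤ if b = a then 1 else 0 := by
    intro a b
    split_ifs with h
    · subst h
      rw [real_inner_self_eq_norm_sq]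
      nlinarith [hv1 b, norm_nonneg (v b)]
    · exact (hv (Ne.symm h)).le
  rw [← real_inner_self_eq_norm_sq, sum_inner, Finset.mul_sum]
  refine Finset.sum_le_sum fun k hk => ?_
  calc ⟪c k • v (σ k), ∑ l ∈ K, c l • v (σ l)⟫
      = c k * ∑ l ∈ K, c l * ⟪v (σ k), v (σ l)⟫ := by
        rw [real_inner_smul_left, inner_sum]
        simp only [real_inner_smul_right]
    _ ≤ c k * ∑ l ∈ K with σ l = σ k, c l := by
        rw [Finset.sum_filter]
        gcongr with l hl
        · exact hc k hk
        · calc c l * ⟪v (σ k), v (σ l)⟫ ≤ c l * (if σ l = σ k then 1 else 0) :=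
                mul_le_mul_of_nonneg_left (hinner _ _) (hc l hl)
            _ = if σ l = σ k then c l else 0 := by split_ifs <;> simp
    _ ≤ B * c k := by rw [mul_comm]; exact mul_le_mul_of_nonneg_right (hB k hk) (hc k hk)

theorem sum_sub_le_of_subset_Icc {a : ℕ → ℝ} {S : Finset ℕ} {m M : ℕ} (hmM : m ≤ M)
    (hS : S ⊆ Finset.Icc m M) (ha : ∀ j ∈ Finset.Icc m M, a j ≤ a (j + 1)) :
    ∑ j ∈ S, (a (j + 1) - a j) ≤ a (M + 1) - a m := by
  calc ∑ j ∈ S, (a (j + 1) - a j) ≤ ∑ j ∈ Finset.Icc m M, (a (j + 1) - a j) :=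
        Finset.sum_le_sum_of_subset_of_nonneg hS fun j hj _ => sub_nonneg.2 (ha j hj)
    _ = a (M + 1) - a m := by
        rw [← Finset.Ico_add_one_right_eq_Icc, Finset.sum_Ico_sub a (by omega)]

theorem sum_sub_filter_tag_eq_le {n : ℕ} {a t : ℕ → ℝ} {δ : ℝ}
    (hmono : ∀ i < n, a i ≤ a (i + 1)) (hmesh : ∀ i < n, a (i + 1) - a i < δ)
    (htag : ∀ i < n, t i ∈ Icc (a i) (a (i + 1))) {i : ℕ} (hi : i < n) :
    ∑ j ∈ Finset.range n with t j = t i, (a (j + 1) - a j) ≤ 2 * δ := by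
  set S := (Finset.range n).filter (t · = t i)
  have hS : S.Nonempty := ⟨i, by simp [S, hi]⟩
  obtain ⟨hm, htm⟩ := Finset.mem_filter.1 (S.min'_mem hS)
  obtain ⟨hM, htM⟩ := Finset.mem_filter.1 (S.max'_mem hS)
  rw [Finset.mem_range] at hm hM
  have hcells : ∑ j ∈ S, (a (j + 1) - a j) ≤ a (S.max' hS + 1) - a (S.min' hS) :=
    sum_sub_le_of_subset_Icc (S.min'_le_max' hS)
      (fun j hj => Finset.mem_Icc.2 ⟨S.min'_le j hj, S.le_max' j hj⟩)
      (fun j hj => hmono j (by have := (Finset.mem_Icc.1 hj).2; omega))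
  linarith [hmesh _ hm, hmesh _ hM, (htag _ hm).2, (htag _ hM).1]

theorem hasRiemannIntegral_zero_of_orthogonal {f : ℝ → E}
    (hf : Pairwise fun s t => ⟪f s, f t⟫ = 0) (hf1 : ∀ t, ‖f t‖ ≤ 1) :
    HasRiemannIntegral f 0 := by
  intro ε hε
  refine ⟨ε ^ 2 / 4, by positivity, fun n a t ha0 han hmono hmesh htag => ?_⟩
  have hlength : ∑ i ∈ Finset.range n, (a (i + 1) - a i) = 1 := by
    rw [Finset.sum_range_sub, ha0, han, sub_zero]
  have hsq : ‖∑ i ∈ Finset.range n, (a (i + 1) - a i) • f (t i)‖ ^ 2 ≤ 2 * (ε ^ 2 / 4) * 1 :=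
    hlength ▸ norm_sq_sum_smul_le_of_orthogonal hf hf1
      (fun i hi => sub_nonneg.2 (hmono i (Finset.mem_range.1 hi))) t
      (fun i hi => sum_sub_filter_tag_eq_le hmono hmesh htag (Finset.mem_range.1 hi))
  rw [sub_zero]
  exact lt_of_pow_lt_pow_left₀ 2 hε.le (by nlinarith)

end Riemann

theorem TopologicalSpace.IsSeparable.countable_of_pairwise_le_dist {α X : Type*}
    [PseudoMetricSpace X] {g : α → X} (hg : IsSeparable (range g)) {ε : ℝ} (hε : 0 < ε)
    {A : Set α} (hA : A.Pairwise fun s t => ε ≤ dist (g s) (g t)) : A.Countable := by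
  obtain ⟨c, hc, hgc⟩ := hg
  have hcover : A ⊆ ⋃ y ∈ c, {t ∈ A | dist (g t) y < ε / 2} := by
    intro t ht
    obtain ⟨y, hy, hty⟩ := Metric.mem_closure_iff.1 (hgc ⟨t, rfl⟩) (ε / 2) (by positivity)
    exact mem_biUnion hy ⟨ht, hty⟩
  refine (hc.biUnion fun y _ => Subsingleton.countable ?_).mono hcover
  rintro s ⟨hs, hsy⟩ t ⟨ht, hty⟩
  by_contra hst
  linarith [hA hs ht hst, dist_triangle_right (g s) (g t) y]

theorem not_aestronglyMeasurable_restrict_of_pairwise_le_dist {α X : Type*} [MeasurableSpace α]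
    [PseudoMetricSpace X] {μ : Measure α} [NullSingletonClass μ] {A : Set α} (hA : μ A ≠ 0)
    {f : α → X} {ε : ℝ} (hε : 0 < ε) (hf : A.Pairwise fun s t => ε ≤ dist (f s) (f t)) :
    ¬ AEStronglyMeasurable f (μ.restrict A) := by
  rintro ⟨g, hg, hfg⟩
  have hcount : {t ∈ A | f t = g t}.Countable :=
    hg.isSeparable_range.countable_of_pairwise_le_dist hε fun s hs t ht hst => by
      simpa only [hs.2, ht.2] using hf hs.1 ht.1 hst
  have hnull : ∀ᵐ t ∂μ, t ∉ {t ∈ A | f t = g t} :=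
    measure_eq_zero_iff_ae_notMem.1 (hcount.measure_zero μ)
  have hnotA : ∀ᵐ t ∂μ.restrict A, t ∉ A := by
    filter_upwards [hfg, ae_restrict_of_ae hnull] with t hft ht htA
    exact ht ⟨htA, hft⟩
  exact hA (by rw [← Measure.restrict_apply_self]; exact measure_eq_zero_iff_ae_notMem.2 hnotA)

theorem inner_ortFn2_of_ne {s t : ℝ} (hst : s ≠ t) : ⟪ortFn2 s, ortFn2 t⟫ = 0 := by
  unfold ortFn2
  split_ifs with hs ht
  · rw [lp.inner_single_left, lp.single_apply_ne _ _ _ (by simpa [Subtype.ext_iff] using hst)]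
    simp
  all_goals simp

theorem norm_ortFn2_le (t : ℝ) : ‖ortFn2 t‖ ≤ 1 := by
  unfold ortFn2
  split_ifs <;> simp [lp.norm_single]

theorem norm_ortFn2 {t : ℝ} (ht : t ∈ Icc (0 : ℝ) 1) : ‖ortFn2 t‖ = 1 := by
  simp [ortFn2, ht, lp.norm_single]

theorem dist_ortFn2 {s t : ℝ} (hs : s ∈ Icc (0 : ℝ) 1) (ht : t ∈ Icc (0 : ℝ) 1) (hst : s ≠ t) :
    dist (ortFn2 s) (ortFn2 t) = √2 := by
  rw [dist_eq_norm, ← Real.sqrt_sq (norm_nonneg _), norm_sub_sq_real, inner_ortFn2_of_ne hst,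
    norm_ortFn2 hs, norm_ortFn2 ht]
  norm_num

/-- The function `t ↦ e_t : [0,1] → ℓ₂([0,1])` is Riemann integrable with
Riemann integral `0`, but is not Bochner-integrable w.r.t. Lebesgue measure on `[0,1]`;
in particular it is not a.e. equal to any strongly measurable function. -/
theorem ortFn2_riemann_not_bochner :
    HasRiemannIntegral ortFn2 0 ∧
    ¬ Integrable ortFn2 (volume.restrict (Set.Icc (0:ℝ) 1)) ∧
    ¬ ∃ g : ℝ → lp (fun _ : ↥(Set.Icc (0:ℝ) 1) => ℝ) 2,
        StronglyMeasurable g ∧ ortFn2 =ᵐ[volume.restrict (Set.Icc (0:ℝ) 1)] g := by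
  have hnot : ¬ AEStronglyMeasurable ortFn2 (volume.restrict (Icc (0 : ℝ) 1)) :=
    not_aestronglyMeasurable_restrict_of_pairwise_le_dist (by simp) (by positivity)
      fun s hs t ht hst => (dist_ortFn2 hs ht hst).ge
  exact ⟨hasRiemannIntegral_zero_of_orthogonal (fun _ _ => inner_ortFn2_of_ne) norm_ortFn2_le,
    fun h => hnot h.aestronglyMeasurable, hnot⟩
end

section
/- Let ℓ₁([0,1]) be the Banach space of real functions x on [0,1] with Σ_{t∈[0,1]} |x(t)| < ∞, with norm ‖x‖ = Σ_{t∈[0,1]} |x(t)|, and let e_t = χ_{{t}} be its standard unit vectors. Let μ be Lebesgue measure on [0,1] and define f : [0,1] → ℓ₁([0,1]) by f(t) = e_t. Then the limit set I(f) is empty. -/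
open MeasureTheory Set Pointwise

/-- The function `f : [0,1] → ℓ₁([0,1])`, `f t = e_t` (extended by `0` outside `[0,1]`). -/
noncomputable def ortFn1 (t : ℝ) : lp (fun _ : ↥(Set.Icc (0:ℝ) 1) => ℝ) 1 :=
  if h : t ∈ Set.Icc (0:ℝ) 1 then lp.single 1 (⟨t, h⟩ : ↥(Set.Icc (0:ℝ) 1)) 1 else 0

/-!
Given `x ∈ ℓ₁`, pick a finite set `D` of coordinates off which the coordinates of `x` sum to less
than `1/2`, and let `Φ` be the continuous functional summing the coordinates off `D`. Since `D` is
Lebesgue-null, in any refinement of the partition `{[0,1] \ D, ([0,1] \ D)ᶜ}` every piece of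
positive measure is sampled at a point `t ∉ D`, so `Φ (∑ μ(Δᵢ) e_{tᵢ}) = ∑ μ(Δᵢ) = 1`. As
`Φ x < 1/2`, these RL sums stay at distance at least `1 / (2 ‖Φ‖)` from `x`.
-/

open scoped lp

section TsumCompl

variable (𝕜 : Type*) {ι E : Type*} [NormedRing 𝕜] [NormedAddCommGroup E] [Module 𝕜 E]
  [IsBoundedSMul 𝕜 E] [CompleteSpace E]

noncomputable def lp.tsumComplCLM (D : Finset ι) : ℓ¹(ι, E) →L[𝕜] E :=
  lp.tsumCLM 𝕜 ι E - ∑ t ∈ D, lp.evalCLM 𝕜 (fun _ : ι => E) 1 t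

variable {𝕜}

theorem lp.tsumComplCLM_apply (D : Finset ι) (z : ℓ¹(ι, E)) :
    lp.tsumComplCLM 𝕜 D z = ∑' t : {t // t ∉ D}, z t := by
  have hz : Summable fun t => z t := .of_norm (by simpa using z.2.summable)
  simp only [lp.tsumComplCLM, sub_apply, sum_apply, lp.tsumCLM_apply, lp.evalCLM]
  rw [← hz.sum_add_tsum_subtype_compl D]
  simp

theorem lp.tsumComplCLM_single [DecidableEq ι] {D : Finset ι} {a : ι} (ha : a ∉ D) (v : E) :
    lp.tsumComplCLM 𝕜 D (lp.single 1 a v) = v := by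
  rw [lp.tsumComplCLM_apply, tsum_eq_single ⟨a, ha⟩]
  · exact lp.single_apply_self _ _ _
  · intro b hb
    exact lp.single_apply_ne _ _ _ (Subtype.coe_ne_coe.mpr hb)

end TsumCompl

section RLSum

variable {Ω X : Type*} [MeasurableSpace Ω] {μ : Measure Ω}

def binaryPartition (S : Set Ω) : ℕ → Set Ω :=
  fun n => if n = 0 then S else if n = 1 then Sᶜ else ∅

theorem isRLPartition_binaryPartition {S : Set Ω} (hS : MeasurableSet S) :
    IsRLPartition univ (binaryPartition S) := by
  refine ⟨fun n => ?_, fun m n hmn => ?_, ?_⟩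
  · unfold binaryPartition
    split_ifs
    exacts [hS, hS.compl, .empty]
  · simp only [binaryPartition, Function.onFun]
    split_ifs <;> first | omega | simp [disjoint_compl_left, disjoint_compl_right]
  · refine eq_univ_of_forall fun t => mem_iUnion.2 ?_
    by_cases ht : t ∈ S
    exacts [⟨0, by simpa [binaryPartition] using ht⟩, ⟨1, by simpa [binaryPartition] using ht⟩]

theorem IsSampling.mem_of_isFinerPartition_binaryPartition {S : Set Ω} {Γ : ℕ → Set Ω}
    {T : ℕ → Ω} (hT : IsSampling Γ T) (hΓ : IsFinerPartition Γ (binaryPartition S))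
    (hS : μ Sᶜ = 0) {j : ℕ} (hj : μ (Γ j) ≠ 0) : T j ∈ S := by
  obtain ⟨i, hi⟩ := hΓ j
  have hTj := hi (hT j (nonempty_of_measure_ne_zero hj))
  unfold binaryPartition at hi hTj
  split_ifs at hi hTj
  · exact hTj
  · exact absurd (measure_mono_null hi hS) hj
  · exact absurd hTj (notMem_empty _)

theorem IsRLPartition.hasSum_measureReal [IsFiniteMeasure μ] {Γ : ℕ → Set Ω}
    (hΓ : IsRLPartition univ Γ) : HasSum (fun j => μ.real (Γ j)) (μ.real univ) := by
  have hsum : ∑' j, μ (Γ j) = μ univ := by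
    rw [← measure_iUnion hΓ.2.1 hΓ.1, hΓ.2.2]
  simp only [measureReal_def]
  convert ENNReal.hasSum_toReal (f := fun j => μ (Γ j)) (hsum ▸ measure_ne_top μ univ)
  rw [← ENNReal.tsum_toReal_eq (fun j => measure_ne_top μ (Γ j)), hsum]

variable [NormedAddCommGroup X] [NormedSpace ℝ X]

theorem exists_map_RLSum_near {Y : Type*} [NormedAddCommGroup Y] [NormedSpace ℝ Y]
    {f : Ω → X} {x : X} (hx : x ∈ RLLimitSet μ f) (L : X →L[ℝ] Y) {δ : ℝ} (hδ : 0 < δ)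
    {P : ℕ → Set Ω} (hP : IsRLPartition univ P) :
    ∃ Γ : ℕ → Set Ω, IsRLPartition univ Γ ∧ IsFinerPartition Γ P ∧
      ∃ T : ℕ → Ω, IsSampling Γ T ∧ RLSumAbsConv μ f Γ T ∧ ‖L (RLSum μ f Γ T) - L x‖ < δ := by
  obtain ⟨Γ, hΓ, hfiner, T, hT, habs, hclose⟩ := hx (δ / (‖L‖ + 1)) (by positivity) P hP
  refine ⟨Γ, hΓ, hfiner, T, hT, habs, ?_⟩
  calc ‖L (RLSum μ f Γ T) - L x‖ = ‖L (RLSum μ f Γ T - x)‖ := by rw [map_sub]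
    _ ≤ ‖L‖ * ‖RLSum μ f Γ T - x‖ := L.le_opNorm _
    _ ≤ ‖L‖ * (δ / (‖L‖ + 1)) := by gcongr
    _ < δ := by
      rw [mul_div_assoc', div_lt_iff₀ (by positivity)]
      nlinarith [norm_nonneg L]

variable [CompleteSpace X]

theorem RLSumAbsConv.summable {f : Ω → X} {Γ : ℕ → Set Ω} {T : ℕ → Ω}
    (h : RLSumAbsConv μ f Γ T) : Summable fun i => (μ (Γ i)).toReal • f (T i) :=
  .of_norm (by simpa [RLSumAbsConv, norm_smul] using h)

theorem map_RLSum {Y : Type*} [NormedAddCommGroup Y] [NormedSpace ℝ Y] (L : X →L[ℝ] Y)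
    {f : Ω → X} {Γ : ℕ → Set Ω} {T : ℕ → Ω} (h : RLSumAbsConv μ f Γ T) :
    L (RLSum μ f Γ T) = ∑' i, (μ (Γ i)).toReal • L (f (T i)) := by
  simp only [RLSum, L.map_tsum h.summable, map_smul]

end RLSum

theorem Set.Countable.measure_restrict_compl_image_val_compl {α : Type*} [MeasurableSpace α]
    {μ : Measure α} [NullSingletonClass μ] {s : Set α} (hs : MeasurableSet s) {D : Set s}
    (hD : D.Countable) : μ.restrict s (Subtype.val '' Dᶜ)ᶜ = 0 := by
  rw [Measure.restrict_apply' hs, image_val_compl]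
  refine measure_mono_null (fun t ⟨ht, hts⟩ => ?_) ((hD.image Subtype.val).measure_zero μ)
  by_contra htD
  exact ht ⟨hts, htD⟩

theorem ortFn1_coe (a : Icc (0:ℝ) 1) : ortFn1 a = lp.single 1 a 1 :=
  dif_pos a.2

theorem tsumComplCLM_RLSum_ortFn1 {D : Finset (Icc (0:ℝ) 1)} {Γ : ℕ → Set ℝ} {T : ℕ → ℝ}
    (hΓ : IsRLPartition univ Γ)
    (hfiner : IsFinerPartition Γ (binaryPartition (Subtype.val '' (D : Set (Icc (0:ℝ) 1))ᶜ)))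
    (hT : IsSampling Γ T) (habs : RLSumAbsConv (volume.restrict (Icc (0:ℝ) 1)) ortFn1 Γ T) :
    lp.tsumComplCLM ℝ D (RLSum (volume.restrict (Icc (0:ℝ) 1)) ortFn1 Γ T) = 1 := by
  set μ := volume.restrict (Icc (0:ℝ) 1)
  have hnull := D.finite_toSet.countable.measure_restrict_compl_image_val_compl (μ := volume)
    measurableSet_Icc
  have hterm : ∀ j, (μ (Γ j)).toReal • lp.tsumComplCLM ℝ D (ortFn1 (T j)) = μ.real (Γ j) := by
    intro j
    by_cases hj : μ (Γ j) = 0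
    · simp [hj, measureReal_def]
    obtain ⟨a, ha, haT⟩ := hT.mem_of_isFinerPartition_binaryPartition hfiner hnull hj
    rw [← haT, ortFn1_coe, lp.tsumComplCLM_single ha, smul_eq_mul, mul_one, measureReal_def]
  rw [map_RLSum _ habs, tsum_congr hterm, hΓ.hasSum_measureReal.tsum_eq]
  simp [μ]

/-- For the function `f(t) = e_t : [0,1] → ℓ₁([0,1])` (w.r.t. Lebesgue measure
on `[0,1]`), the limit set `I(f)` is empty. -/
theorem ortFn1_limitSet_empty :
    RLLimitSet (volume.restrict (Set.Icc (0:ℝ) 1)) ortFn1 = ∅ := by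
  refine eq_empty_of_forall_notMem fun x hx => ?_
  obtain ⟨D, hD⟩ : ∃ D : Finset (Icc (0:ℝ) 1), ∑' t : {t // t ∉ D}, x t < 2⁻¹ :=
    ((tendsto_order.1 (tendsto_tsum_compl_atTop_zero fun t => x t)).2 _ (by norm_num)).exists
  have hS : MeasurableSet (Subtype.val '' (D : Set (Icc (0:ℝ) 1))ᶜ) :=
    measurableSet_Icc.subtype_image D.finite_toSet.measurableSet.compl
  obtain ⟨Γ, hΓ, hfiner, T, hT, habs, hnear⟩ := exists_map_RLSum_near hx (lp.tsumComplCLM ℝ D)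
    (by norm_num : (0:ℝ) < 2⁻¹) (isRLPartition_binaryPartition hS)
  rw [tsumComplCLM_RLSum_ortFn1 hΓ hfiner hT habs, lp.tsumComplCLM_apply, Real.norm_eq_abs]
    at hnear
  linarith [le_abs_self (1 - ∑' t : {t // t ∉ D}, x t)]
end
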